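/- arXiv:nlin/0405069 — 11 statements merged into one kernel-verified Lean document; each statement's English description precedes it below -/
import Mathlib

section
/- Let f : ℝ → ℝ and let u : ℝ × ℝ → ℝ be twice continuously differentiable on the open set {(t,x) : t ≠ x} and satisfy u_tx(t,x) = (t−x)⁻² · f(u(t,x)) there. Fix s ∈ ℝ and define v(t,x) = u(t/(1−s·t), x/(1−s·x)) on the open set Ω = {(t,x) : 1−s·t ≠ 0, 1−s·x ≠ 0, t ≠ x}. Then for all (t,x) ∈ Ω one has t/(1−s·t) ≠ x/(1−s·x), v is twice continuously differentiable on Ω, and v_tx(t,x) = (t−x)⁻² · f(v(t,x)) on Ω. -/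
/-- Partial derivative with respect to the first variable `t`. -/
noncomputable def pderivT (u : ℝ × ℝ → ℝ) (p : ℝ × ℝ) : ℝ :=
  deriv (fun s => u (s, p.2)) p.1

/-- Partial derivative with respect to the second variable `x`. -/
noncomputable def pderivX (u : ℝ × ℝ → ℝ) (p : ℝ × ℝ) : ℝ :=
  deriv (fun y => u (p.1, y)) p.2

/-- the projective symmetry (flow of `t²∂_t + x²∂_x`) of the
sl(2,ℝ)-invariant equation `u_tx = (t-x)⁻² f(u)`. -/
theorem stmt_2 (f : ℝ → ℝ) (u : ℝ × ℝ → ℝ) (s : ℝ)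
    (hu : ContDiffOn ℝ 2 u {p : ℝ × ℝ | p.1 ≠ p.2})
    (heq : ∀ p : ℝ × ℝ, p.1 ≠ p.2 →
      pderivT (pderivX u) p = ((p.1 - p.2) ^ 2)⁻¹ * f (u p)) :
    let v : ℝ × ℝ → ℝ := fun p => u (p.1 / (1 - s * p.1), p.2 / (1 - s * p.2))
    let Ω : Set (ℝ × ℝ) := {p | 1 - s * p.1 ≠ 0 ∧ 1 - s * p.2 ≠ 0 ∧ p.1 ≠ p.2}
    (∀ p ∈ Ω, p.1 / (1 - s * p.1) ≠ p.2 / (1 - s * p.2)) ∧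
    ContDiffOn ℝ 2 v Ω ∧
    ∀ p ∈ Ω, pderivT (pderivX v) p = ((p.1 - p.2) ^ 2)⁻¹ * f (v p) := by
  intro v Ω
  set U : Set (ℝ × ℝ) := {p : ℝ × ℝ | p.1 ≠ p.2} with hUdef
  have hU : IsOpen U := isOpen_ne_fun continuous_fst continuous_snd
  have hΩ : IsOpen Ω := by
    have h1 : IsOpen {p : ℝ × ℝ | 1 - s * p.1 ≠ 0} :=
      isOpen_ne_fun (by continuity) continuous_const
    have h2 : IsOpen {p : ℝ × ℝ | 1 - s * p.2 ≠ 0} :=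
      isOpen_ne_fun (by continuity) continuous_const
    have : Ω = {p : ℝ × ℝ | 1 - s * p.1 ≠ 0} ∩
        ({p : ℝ × ℝ | 1 - s * p.2 ≠ 0} ∩ U) := rfl
    rw [this]
    exact h1.inter (h2.inter hU)
  set φ : ℝ → ℝ := fun t => t / (1 - s * t) with hφdef
  set dφ : ℝ → ℝ := fun t => ((1 - s * t) ^ 2)⁻¹ with hdφdef
  have hphi : ∀ y : ℝ, 1 - s * y ≠ 0 → HasDerivAt φ (dφ y) y := by
    intro y hy
    have h1 : HasDerivAt (fun y : ℝ => 1 - s * y) (-s) y := by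
      simpa using ((hasDerivAt_id y).const_mul s).const_sub 1
    have h2 := (hasDerivAt_id y).div h1 hy
    refine h2.congr_deriv ?_
    rw [hdφdef]
    field_simp
    simp only [id]
    ring
  -- claim 1
  have hne : ∀ p ∈ Ω, φ p.1 ≠ φ p.2 := by
    intro p hp h
    obtain ⟨h1, h2, h3⟩ := hp
    apply h3
    rw [hφdef] at h
    rw [div_eq_div_iff h1 h2] at h
    linear_combination h
  have hΦmem : ∀ p ∈ Ω, ((φ p.1, φ p.2) : ℝ × ℝ) ∈ U := fun p hp => hne p hp
  -- differentiability of u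
  have hdiffu : ∀ q ∈ U, DifferentiableAt ℝ u q := fun q hq =>
    (hu.contDiffAt (hU.mem_nhds hq)).differentiableAt two_ne_zero
  set g : ℝ × ℝ → ℝ := fun q => fderiv ℝ u q ((0 : ℝ), (1 : ℝ)) with hgdef
  have hg : ContDiffOn ℝ 1 g U := by
    have := hu.fderiv_of_isOpen (m := 1) hU (by norm_num)
    exact (ContinuousLinearMap.apply ℝ ℝ ((0 : ℝ), (1 : ℝ))).contDiff.comp_contDiffOn this
  have hgdiff : ∀ q ∈ U, DifferentiableAt ℝ g q := fun q hq =>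
    (hg.contDiffAt (hU.mem_nhds hq)).differentiableAt one_ne_zero
  -- pderivX u = g on U
  have key1 : ∀ q ∈ U, pderivX u q = g q := by
    intro q hq
    have h2 : HasDerivAt (fun y : ℝ => (q.1, y)) ((0 : ℝ), (1 : ℝ)) q.2 :=
      (hasDerivAt_const _ _).prodMk (hasDerivAt_id _)
    have h1 := (hdiffu q hq).hasFDerivAt.comp_hasDerivAt q.2 (by simpa using h2)
    exact h1.deriv
  -- pde for g
  have key2 : ∀ q ∈ U, pderivT g q = ((q.1 - q.2) ^ 2)⁻¹ * f (u q) := by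
    intro q hq
    rw [← heq q hq]
    unfold pderivT
    apply Filter.EventuallyEq.deriv_eq
    have hev : ∀ᶠ t in nhds q.1, ((t, q.2) : ℝ × ℝ) ∈ U := by
      have hc : Continuous fun t : ℝ => ((t, q.2) : ℝ × ℝ) :=
        continuous_id.prodMk continuous_const
      exact hc.continuousAt.preimage_mem_nhds (hU.mem_nhds hq)
    filter_upwards [hev] with t ht
    exact (key1 (t, q.2) ht).symm
  -- pderivT g via fderiv
  have key3 : ∀ q ∈ U, pderivT g q = fderiv ℝ g q ((1 : ℝ), (0 : ℝ)) := by
    intro q hq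
    have h2 : HasDerivAt (fun t : ℝ => (t, q.2)) ((1 : ℝ), (0 : ℝ)) q.1 :=
      (hasDerivAt_id _).prodMk (hasDerivAt_const _ _)
    have h1 := (hgdiff q hq).hasFDerivAt.comp_hasDerivAt q.1 (by simpa using h2)
    exact h1.deriv
  -- pderivX v on Ω
  have key4 : ∀ q ∈ Ω, pderivX v q = g (φ q.1, φ q.2) * dφ q.2 := by
    intro q hq
    have h2 : HasDerivAt (fun y : ℝ => ((φ q.1, φ y) : ℝ × ℝ)) ((0 : ℝ), dφ q.2) q.2 :=
      (hasDerivAt_const _ _).prodMk (hphi q.2 hq.2.1)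
    have hF := (hdiffu _ (hΦmem q hq)).hasFDerivAt
    have h1 := hF.comp_hasDerivAt q.2 h2
    have h3 : fderiv ℝ u ((φ q.1, φ q.2) : ℝ × ℝ) ((0 : ℝ), dφ q.2)
        = g (φ q.1, φ q.2) * dφ q.2 := by
      have he : ((0 : ℝ), dφ q.2) = dφ q.2 • (((0 : ℝ), (1 : ℝ)) : ℝ × ℝ) := by simp
      rw [he, (fderiv ℝ u _).map_smul, smul_eq_mul, hgdef, mul_comm]
    have h4 : HasDerivAt (fun y => v (q.1, y)) (g (φ q.1, φ q.2) * dφ q.2) q.2 := by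
      rw [← h3]; exact h1
    exact h4.deriv
  refine ⟨fun p hp => hne p hp, ?_, ?_⟩
  · -- smoothness of v
    have hden1 : ContDiffOn ℝ 2 (fun p : ℝ × ℝ => 1 - s * p.1) Ω :=
      (contDiff_const.sub (contDiff_const.mul contDiff_fst)).contDiffOn
    have hden2 : ContDiffOn ℝ 2 (fun p : ℝ × ℝ => 1 - s * p.2) Ω :=
      (contDiff_const.sub (contDiff_const.mul contDiff_snd)).contDiffOn
    have hΦ : ContDiffOn ℝ 2 (fun p : ℝ × ℝ => ((φ p.1, φ p.2) : ℝ × ℝ)) Ω :=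
      (contDiff_fst.contDiffOn.div hden1 fun p hp => hp.1).prodMk
        (contDiff_snd.contDiffOn.div hden2 fun p hp => hp.2.1)
    exact hu.comp hΦ fun p hp => hΦmem p hp
  · -- the equation
    intro p hp
    have hev : (fun t => pderivX v (t, p.2)) =ᶠ[nhds p.1]
        fun t => g (φ t, φ p.2) * dφ p.2 := by
      have hc : Continuous fun t : ℝ => ((t, p.2) : ℝ × ℝ) :=
        continuous_id.prodMk continuous_const
      filter_upwards [hc.continuousAt.preimage_mem_nhds (hΩ.mem_nhds hp)] with t ht
      exact key4 (t, p.2) ht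
    have hΦp : ((φ p.1, φ p.2) : ℝ × ℝ) ∈ U := hΦmem p hp
    have h2 : HasDerivAt (fun t : ℝ => ((φ t, φ p.2) : ℝ × ℝ)) ((dφ p.1, 0) : ℝ × ℝ) p.1 :=
      (hphi p.1 hp.1).prodMk (hasDerivAt_const _ _)
    have h1 := (hgdiff _ hΦp).hasFDerivAt.comp_hasDerivAt p.1 h2
    have h3 : fderiv ℝ g ((φ p.1, φ p.2) : ℝ × ℝ) ((dφ p.1, 0) : ℝ × ℝ)
        = dφ p.1 * fderiv ℝ g ((φ p.1, φ p.2) : ℝ × ℝ) ((1 : ℝ), (0 : ℝ)) := by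
      have he : ((dφ p.1, 0) : ℝ × ℝ) = dφ p.1 • (((1 : ℝ), (0 : ℝ)) : ℝ × ℝ) := by simp
      rw [he, (fderiv ℝ g _).map_smul, smul_eq_mul]
    have h4 : HasDerivAt (fun t => g (φ t, φ p.2) * dφ p.2)
        (dφ p.1 * pderivT g (φ p.1, φ p.2) * dφ p.2) p.1 := by
      have := h1.mul_const (dφ p.2)
      rw [h3, ← key3 _ hΦp] at this
      exact this
    have h5 : pderivT (pderivX v) p
        = dφ p.1 * pderivT g (φ p.1, φ p.2) * dφ p.2 := by
      unfold pderivT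
      rw [hev.deriv_eq]
      exact h4.deriv
    rw [h5, key2 _ hΦp]
    have hvp : v p = u (φ p.1, φ p.2) := rfl
    rw [hvp]
    have hne' : φ p.1 - φ p.2 ≠ 0 := sub_ne_zero.mpr (hne p hp)
    have htx : p.1 - p.2 ≠ 0 := sub_ne_zero.mpr hp.2.2
    have hsub : φ p.1 - φ p.2 = (p.1 - p.2) / ((1 - s * p.1) * (1 - s * p.2)) := by
      show p.1 / (1 - s * p.1) - p.2 / (1 - s * p.2) = _
      rw [div_sub_div _ _ hp.1 hp.2.1]
      congr 1
      ring
    have hcoef : dφ p.1 * ((φ p.1 - φ p.2) ^ 2)⁻¹ * dφ p.2 = ((p.1 - p.2) ^ 2)⁻¹ := by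
      rw [hdφdef, hsub, div_pow, inv_div]
      field_simp
      exact div_self (mul_ne_zero hp.1 hp.2.1)
    calc dφ p.1 * (((φ p.1 - φ p.2) ^ 2)⁻¹ * f (u (φ p.1, φ p.2))) * dφ p.2
        = (dφ p.1 * ((φ p.1 - φ p.2) ^ 2)⁻¹ * dφ p.2) * f (u (φ p.1, φ p.2)) := by ring
      _ = ((p.1 - p.2) ^ 2)⁻¹ * f (u (φ p.1, φ p.2)) := by rw [hcoef]
end

section
/- Let u : ℝ × ℝ → ℝ be twice continuously differentiable with u(t,x) ≠ 0 for all (t,x), and suppose u satisfies u_tt(t,x) = u_xx(t,x) − u(t,x)⁻¹·(u_x(t,x))² for all (t,x). Then for all real a ≠ 0, λ ≠ 0 and all t₀, x₀, μ ∈ ℝ, the function v(t,x) = λ·exp(μ·x)·u(a·t + t₀, a·x + x₀) is twice continuously differentiable, nowhere zero, and satisfies v_tt(t,x) = v_xx(t,x) − v(t,x)⁻¹·(v_x(t,x))² for all (t,x). -/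
private lemma hasDerivAt_sliceT {u : ℝ × ℝ → ℝ} (hu : Differentiable ℝ u) (t x : ℝ) :
    HasDerivAt (fun s => u (s, x)) (pderivT u (t, x)) t := by
  have h : DifferentiableAt ℝ (fun s => u (s, x)) t :=
    (hu (t, x)).comp t (differentiableAt_id.prodMk (differentiableAt_const x))
  exact h.hasDerivAt

private lemma hasDerivAt_sliceX {u : ℝ × ℝ → ℝ} (hu : Differentiable ℝ u) (t x : ℝ) :
    HasDerivAt (fun y => u (t, y)) (pderivX u (t, x)) x := by
  have h : DifferentiableAt ℝ (fun y => u (t, y)) x :=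
    (hu (t, x)).comp x ((differentiableAt_const t).prodMk differentiableAt_id)
  exact h.hasDerivAt

private lemma hasDerivAt_affT {u : ℝ × ℝ → ℝ} (hu : Differentiable ℝ u) (a t₀ c t : ℝ) :
    HasDerivAt (fun s => u (a * s + t₀, c)) (a * pderivT u (a * t + t₀, c)) t := by
  have h1 : HasDerivAt (fun s : ℝ => a * s + t₀) a t := by
    simpa using ((hasDerivAt_id t).const_mul a).add_const t₀
  have h2 := (hasDerivAt_sliceT hu (a * t + t₀) c).comp t h1
  simpa [Function.comp_def, mul_comm] using h2

private lemma hasDerivAt_affX {u : ℝ × ℝ → ℝ} (hu : Differentiable ℝ u) (a x₀ c x : ℝ) :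
    HasDerivAt (fun y => u (c, a * y + x₀)) (a * pderivX u (c, a * x + x₀)) x := by
  have h1 : HasDerivAt (fun y : ℝ => a * y + x₀) a x := by
    simpa using ((hasDerivAt_id x).const_mul a).add_const x₀
  have h2 := (hasDerivAt_sliceX hu c (a * x + x₀)).comp x h1
  simpa [Function.comp_def, mul_comm] using h2

private lemma diff_pderivT {u : ℝ × ℝ → ℝ} (hu : ContDiff ℝ 2 u) :
    Differentiable ℝ (pderivT u) := by
  have he : pderivT u = fun p => fderiv ℝ u p (1, 0) := by
    funext p
    have h : HasDerivAt (fun s => u (s, p.2)) (fderiv ℝ u (p.1, p.2) ((1 : ℝ), (0 : ℝ))) p.1 :=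
      (hu.differentiable two_ne_zero (p.1, p.2)).hasFDerivAt.comp_hasDerivAt p.1
        ((hasDerivAt_id p.1).prodMk (hasDerivAt_const p.1 p.2))
    simpa [pderivT] using h.deriv
  rw [he]
  exact ((hu.fderiv_right (m := 1) (by norm_num)).clm_apply contDiff_const).differentiable one_ne_zero

private lemma diff_pderivX {u : ℝ × ℝ → ℝ} (hu : ContDiff ℝ 2 u) :
    Differentiable ℝ (pderivX u) := by
  have he : pderivX u = fun p => fderiv ℝ u p (0, 1) := by
    funext p
    have h : HasDerivAt (fun y => u (p.1, y)) (fderiv ℝ u (p.1, p.2) ((0 : ℝ), (1 : ℝ))) p.2 :=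
      (hu.differentiable two_ne_zero (p.1, p.2)).hasFDerivAt.comp_hasDerivAt p.2
        ((hasDerivAt_const p.2 p.1).prodMk (hasDerivAt_id p.2))
    simpa [pderivX] using h.deriv
  rw [he]
  exact ((hu.fderiv_right (m := 1) (by norm_num)).clm_apply contDiff_const).differentiable one_ne_zero

/-- the five-parameter symmetry group of `u_tt = u_xx − u⁻¹ u_x²`. -/
theorem stmt_7 (u : ℝ × ℝ → ℝ) (hu : ContDiff ℝ 2 u) (hne : ∀ p : ℝ × ℝ, u p ≠ 0)
    (heq : ∀ p : ℝ × ℝ, pderivT (pderivT u) p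
      = pderivX (pderivX u) p - (u p)⁻¹ * (pderivX u p) ^ 2) :
    ∀ a lam t₀ x₀ μ : ℝ, a ≠ 0 → lam ≠ 0 →
      let v : ℝ × ℝ → ℝ := fun p =>
        lam * Real.exp (μ * p.2) * u (a * p.1 + t₀, a * p.2 + x₀)
      ContDiff ℝ 2 v ∧ (∀ p : ℝ × ℝ, v p ≠ 0) ∧
        ∀ p : ℝ × ℝ, pderivT (pderivT v) p
          = pderivX (pderivX v) p - (v p)⁻¹ * (pderivX v p) ^ 2 := by
  intro a lam t₀ x₀ μ ha hlam v
  have hud : Differentiable ℝ u := hu.differentiable two_ne_zero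
  have hdT : Differentiable ℝ (pderivT u) := diff_pderivT hu
  have hdX : Differentiable ℝ (pderivX u) := diff_pderivX hu
  -- first derivatives of v
  have hvT : ∀ p : ℝ × ℝ, pderivT v p
      = lam * Real.exp (μ * p.2) * (a * pderivT u (a * p.1 + t₀, a * p.2 + x₀)) := by
    intro p
    have h : HasDerivAt (fun s => v (s, p.2))
        (lam * Real.exp (μ * p.2) * (a * pderivT u (a * p.1 + t₀, a * p.2 + x₀))) p.1 :=
      (hasDerivAt_affT hud a t₀ (a * p.2 + x₀) p.1).const_mul (lam * Real.exp (μ * p.2))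
    exact h.deriv
  have hvX : ∀ p : ℝ × ℝ, pderivX v p
      = lam * (Real.exp (μ * p.2) * (μ * 1)) * u (a * p.1 + t₀, a * p.2 + x₀)
        + lam * Real.exp (μ * p.2) * (a * pderivX u (a * p.1 + t₀, a * p.2 + x₀)) := by
    intro p
    have h1 : HasDerivAt (fun y => lam * Real.exp (μ * y))
        (lam * (Real.exp (μ * p.2) * (μ * 1))) p.2 :=
      (((hasDerivAt_id p.2).const_mul μ).exp).const_mul lam
    have h2 := hasDerivAt_affX hud a x₀ (a * p.1 + t₀) p.2
    exact (h1.mul h2).deriv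
  -- second derivative in t
  have hvTT : ∀ p : ℝ × ℝ, pderivT (pderivT v) p
      = lam * Real.exp (μ * p.2)
          * (a * (a * pderivT (pderivT u) (a * p.1 + t₀, a * p.2 + x₀))) := by
    intro p
    have hfun : (fun s => pderivT v (s, p.2))
        = fun s => lam * Real.exp (μ * p.2) * (a * pderivT u (a * s + t₀, a * p.2 + x₀)) :=
      funext fun s => hvT (s, p.2)
    have h : HasDerivAt
        (fun s => lam * Real.exp (μ * p.2) * (a * pderivT u (a * s + t₀, a * p.2 + x₀)))
        (lam * Real.exp (μ * p.2)
          * (a * (a * pderivT (pderivT u) (a * p.1 + t₀, a * p.2 + x₀)))) p.1 :=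
      ((hasDerivAt_affT hdT a t₀ (a * p.2 + x₀) p.1).const_mul a).const_mul
        (lam * Real.exp (μ * p.2))
    show deriv (fun s => pderivT v (s, p.2)) p.1 = _
    rw [hfun]
    exact h.deriv
  refine ⟨?_, ?_, ?_⟩
  · -- smoothness
    exact (contDiff_const.mul (Real.contDiff_exp.comp (contDiff_const.mul contDiff_snd))).mul
      (hu.comp (((contDiff_const.mul contDiff_fst).add contDiff_const).prodMk
        ((contDiff_const.mul contDiff_snd).add contDiff_const)))
  · intro p
    exact mul_ne_zero (mul_ne_zero hlam (Real.exp_ne_zero _)) (hne _)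
  · intro p
    set c := a * p.1 + t₀ with hc
    -- second derivative in x
    have h1 : HasDerivAt (fun y => lam * Real.exp (μ * y))
        (lam * (Real.exp (μ * p.2) * (μ * 1))) p.2 :=
      (((hasDerivAt_id p.2).const_mul μ).exp).const_mul lam
    have h1' : HasDerivAt (fun y => lam * (Real.exp (μ * y) * (μ * 1)))
        (lam * (Real.exp (μ * p.2) * (μ * 1) * (μ * 1))) p.2 :=
      ((((hasDerivAt_id p.2).const_mul μ).exp).mul_const (μ * 1)).const_mul lam
    have hA := h1'.mul (hasDerivAt_affX hud a x₀ c p.2)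
    have hB := h1.mul ((hasDerivAt_affX hdX a x₀ c p.2).const_mul a)
    have hXX : pderivX (pderivX v) p
        = (lam * (Real.exp (μ * p.2) * (μ * 1) * (μ * 1)) * u (c, a * p.2 + x₀)
            + lam * (Real.exp (μ * p.2) * (μ * 1)) * (a * pderivX u (c, a * p.2 + x₀)))
          + (lam * (Real.exp (μ * p.2) * (μ * 1)) * (a * pderivX u (c, a * p.2 + x₀))
            + lam * Real.exp (μ * p.2) * (a * (a * pderivX (pderivX u) (c, a * p.2 + x₀)))) := by
      have hfun : (fun y => pderivX v (p.1, y))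
          = fun y => lam * (Real.exp (μ * y) * (μ * 1)) * u (c, a * y + x₀)
              + lam * Real.exp (μ * y) * (a * pderivX u (c, a * y + x₀)) :=
        funext fun y => hvX (p.1, y)
      show deriv (fun y => pderivX v (p.1, y)) p.2 = _
      rw [hfun]
      exact (hA.add hB).deriv
    have hv : v p = lam * Real.exp (μ * p.2) * u (c, a * p.2 + x₀) := rfl
    rw [hvTT p, hXX, hvX p, ← hc, hv, heq (c, a * p.2 + x₀)]
    have hU : u (c, a * p.2 + x₀) ≠ 0 := hne _
    have hE : Real.exp (μ * p.2) ≠ 0 := Real.exp_ne_zero _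
    generalize u (c, a * p.2 + x₀) = U at hU ⊢
    generalize pderivX u (c, a * p.2 + x₀) = D
    field_simp
    ring
end

section
/- For all C₁, C₂ ∈ ℝ, the function u(t,x) = exp(t + x²/2 + C₁·x + C₂) is smooth, everywhere positive, and satisfies u_tt(t,x) = u_xx(t,x) − u(t,x)⁻¹·(u_x(t,x))² for all (t,x) ∈ ℝ². -/
private lemma hInner (C₁ C₂ t : ℝ) (y : ℝ) :
    HasDerivAt (fun y : ℝ => t + y ^ 2 / 2 + C₁ * y + C₂) (y + C₁) y := by
  have h1 : HasDerivAt (fun y : ℝ => y ^ 2 / 2) y y := by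
    have := (hasDerivAt_pow 2 y).div_const 2
    simpa using this
  have h2 : HasDerivAt (fun y : ℝ => C₁ * y) C₁ y := by
    simpa using (hasDerivAt_id y).const_mul C₁
  simpa using (((h1.const_add t)).add h2).add_const C₂

private lemma hX (C₁ C₂ t y : ℝ) :
    HasDerivAt (fun y : ℝ => Real.exp (t + y ^ 2 / 2 + C₁ * y + C₂))
      ((y + C₁) * Real.exp (t + y ^ 2 / 2 + C₁ * y + C₂)) y := by
  simpa [mul_comm] using (hInner C₁ C₂ t y).exp

private lemma hT (C₁ C₂ x t : ℝ) :
    HasDerivAt (fun s : ℝ => Real.exp (s + x ^ 2 / 2 + C₁ * x + C₂))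
      (Real.exp (t + x ^ 2 / 2 + C₁ * x + C₂)) t := by
  have h : HasDerivAt (fun s : ℝ => s + x ^ 2 / 2 + C₁ * x + C₂) 1 t := by
    simpa using (((hasDerivAt_id t).add_const (x ^ 2 / 2)).add_const (C₁ * x)).add_const C₂
  simpa using h.exp

/-- explicit `⟨e₁+e₄⟩`-invariant solution of `u_tt = u_xx − u⁻¹ u_x²`. -/
theorem stmt_8 (C₁ C₂ : ℝ) :
    let u : ℝ × ℝ → ℝ := fun p =>
      Real.exp (p.1 + p.2 ^ 2 / 2 + C₁ * p.2 + C₂)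
    ContDiff ℝ (⊤ : ℕ∞) u ∧ (∀ p : ℝ × ℝ, 0 < u p) ∧
      ∀ p : ℝ × ℝ, pderivT (pderivT u) p
        = pderivX (pderivX u) p - (u p)⁻¹ * (pderivX u p) ^ 2 := by
  intro u
  have husmooth : ContDiff ℝ (⊤ : ℕ∞) u := by
    apply Real.contDiff_exp.comp
    fun_prop (disch := norm_num)
  refine ⟨husmooth, fun p => Real.exp_pos _, fun p => ?_⟩
  have hpT : pderivT u = u := by
    funext q
    exact (hT C₁ C₂ q.2 q.1).deriv
  have hpX : pderivX u = fun q => (q.2 + C₁) * u q := by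
    funext q
    exact (hX C₁ C₂ q.1 q.2).deriv
  have hTT : pderivT (pderivT u) p = u p := by
    rw [hpT]; exact (hT C₁ C₂ p.2 p.1).deriv
  have hXX : pderivX (pderivX u) p = u p + (p.2 + C₁) ^ 2 * u p := by
    rw [hpX]
    unfold pderivX
    have h : HasDerivAt (fun y : ℝ => (y + C₁) * Real.exp (p.1 + y ^ 2 / 2 + C₁ * y + C₂))
        (1 * Real.exp (p.1 + p.2 ^ 2 / 2 + C₁ * p.2 + C₂) +
          (p.2 + C₁) * ((p.2 + C₁) * Real.exp (p.1 + p.2 ^ 2 / 2 + C₁ * p.2 + C₂))) p.2 :=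
      ((hasDerivAt_id p.2).add_const C₁).mul (hX C₁ C₂ p.1 p.2)
    rw [h.deriv]; ring
  rw [hTT, hXX, hpX]
  have hu : u p ≠ 0 := (Real.exp_pos _).ne'
  field_simp [u]
  ring
end

section
/- For all C₁, C₂ ∈ ℝ, the function u(t,x) = exp(t·x + x⁴/12 + C₁·x + C₂) is smooth, everywhere positive, and satisfies u_tt(t,x) = u_xx(t,x) − u(t,x)⁻¹·(u_x(t,x))² for all (t,x) ∈ ℝ². -/
section aux

variable (C₁ C₂ : ℝ)

private noncomputable def U (C₁ C₂ : ℝ) : ℝ × ℝ → ℝ := fun p =>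
  Real.exp (p.1 * p.2 + p.2 ^ 4 / 12 + C₁ * p.2 + C₂)

private lemma hasDerivT (t x : ℝ) :
    HasDerivAt (fun s => U C₁ C₂ (s, x)) (x * U C₁ C₂ (t, x)) t := by
  have h1 : HasDerivAt (fun s : ℝ => s * x + x ^ 4 / 12 + C₁ * x + C₂) x t := by
    simpa using ((((hasDerivAt_id t).mul_const x).add_const
      (x ^ 4 / 12)).add_const (C₁ * x)).add_const C₂
  simpa [U, mul_comm] using h1.exp

private lemma hasDerivX (t x : ℝ) :
    HasDerivAt (fun y => U C₁ C₂ (t, y)) ((t + x ^ 3 / 3 + C₁) * U C₁ C₂ (t, x)) x := by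
  have h1 : HasDerivAt (fun y : ℝ => t * y + y ^ 4 / 12 + C₁ * y + C₂)
      (t + x ^ 3 / 3 + C₁) x := by
    have h0 : HasDerivAt (fun y : ℝ => t * y + y ^ 4 / 12 + C₁ * y + C₂)
        (t * 1 + ((4 : ℕ) : ℝ) * x ^ (4 - 1) / 12 + C₁ * 1) x :=
      ((((hasDerivAt_id x).const_mul t).add
        ((hasDerivAt_pow 4 x).div_const 12)).add
        ((hasDerivAt_id x).const_mul C₁)).add_const C₂
    convert h0 using 1
    push_cast; ring
  simpa [U, mul_comm] using h1.exp

private lemma pderivT_eq (p : ℝ × ℝ) :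
    pderivT (U C₁ C₂) p = p.2 * U C₁ C₂ p := by
  simpa [pderivT] using (hasDerivT C₁ C₂ p.1 p.2).deriv

private lemma pderivX_eq (p : ℝ × ℝ) :
    pderivX (U C₁ C₂) p = (p.1 + p.2 ^ 3 / 3 + C₁) * U C₁ C₂ p := by
  simpa [pderivX] using (hasDerivX C₁ C₂ p.1 p.2).deriv

end aux

/-- explicit `⟨e₃+e₄⟩`-invariant solution of `u_tt = u_xx − u⁻¹ u_x²`. -/
theorem stmt_9 (C₁ C₂ : ℝ) :
    let u : ℝ × ℝ → ℝ := fun p =>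
      Real.exp (p.1 * p.2 + p.2 ^ 4 / 12 + C₁ * p.2 + C₂)
    ContDiff ℝ (⊤ : ℕ∞) u ∧ (∀ p : ℝ × ℝ, 0 < u p) ∧
      ∀ p : ℝ × ℝ, pderivT (pderivT u) p
        = pderivX (pderivX u) p - (u p)⁻¹ * (pderivX u p) ^ 2 := by
  intro u
  have hu : u = U C₁ C₂ := rfl
  refine ⟨?_, fun p => Real.exp_pos _, ?_⟩
  · exact Real.contDiff_exp.comp
      ((((contDiff_fst.mul contDiff_snd).add
        ((contDiff_snd.pow 4).div_const 12)).add
        (contDiff_const.mul contDiff_snd)).add contDiff_const)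
  · intro p
    rw [hu]
    have hTT : pderivT (pderivT (U C₁ C₂)) p = p.2 ^ 2 * U C₁ C₂ p := by
      have hfun : (fun s => pderivT (U C₁ C₂) (s, p.2))
          = fun s => p.2 * U C₁ C₂ (s, p.2) := by
        funext s; exact pderivT_eq C₁ C₂ (s, p.2)
      have h := ((hasDerivT C₁ C₂ p.1 p.2).const_mul p.2).deriv
      rw [pderivT, hfun, h]; ring
    have hXX : pderivX (pderivX (U C₁ C₂)) p
        = (p.2 ^ 2 + (p.1 + p.2 ^ 3 / 3 + C₁) ^ 2) * U C₁ C₂ p := by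
      have hfun : (fun y => pderivX (U C₁ C₂) (p.1, y))
          = fun y => (p.1 + y ^ 3 / 3 + C₁) * U C₁ C₂ (p.1, y) := by
        funext y; exact pderivX_eq C₁ C₂ (p.1, y)
      have hA : HasDerivAt (fun y : ℝ => p.1 + y ^ 3 / 3 + C₁) (p.2 ^ 2) p.2 := by
        have h0 : HasDerivAt (fun y : ℝ => p.1 + y ^ 3 / 3 + C₁)
            (0 + ((3 : ℕ) : ℝ) * p.2 ^ (3 - 1) / 3) p.2 :=
          ((hasDerivAt_const p.2 p.1).add
            ((hasDerivAt_pow 3 p.2).div_const 3)).add_const C₁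
        convert h0 using 1
        push_cast; ring
      have h : deriv (fun y => (p.1 + y ^ 3 / 3 + C₁) * U C₁ C₂ (p.1, y)) p.2 = _ :=
        (hA.mul (hasDerivX C₁ C₂ p.1 p.2)).deriv
      rw [pderivX, hfun, h]; ring
    rw [hTT, hXX, pderivX_eq]
    have hpos : U C₁ C₂ p ≠ 0 := (Real.exp_pos _).ne'
    field_simp
    ring
end

section
/- Let C₁ ≠ 0 and C₂ ∈ ℝ. On the open set Ω = {(t,x) ∈ ℝ² : cos(t + C₂) ≠ 0}, the function u(t,x) = C₁·exp(−x²/2)·cos(t + C₂) is smooth, nowhere zero, and satisfies u_tt(t,x) = u_xx(t,x) − u(t,x)⁻¹·(u_x(t,x))² for all (t,x) ∈ Ω. -/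
private lemma exp_hd (y : ℝ) :
    HasDerivAt (fun y : ℝ => Real.exp (-y ^ 2 / 2)) (-y * Real.exp (-y ^ 2 / 2)) y := by
  have h : HasDerivAt (fun y : ℝ => -y ^ 2 / 2) (-y) y := by
    have := ((hasDerivAt_pow 2 y).neg).div_const 2
    refine this.congr_deriv ?_
    ring
  simpa [mul_comm] using h.exp

private lemma cos_hd (s C₂ : ℝ) :
    HasDerivAt (fun s : ℝ => Real.cos (s + C₂)) (-Real.sin (s + C₂)) s := by
  simpa using ((hasDerivAt_id s).add_const C₂).cos

private lemma sin_hd (s C₂ : ℝ) :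
    HasDerivAt (fun s : ℝ => Real.sin (s + C₂)) (Real.cos (s + C₂)) s := by
  simpa using ((hasDerivAt_id s).add_const C₂).sin

/-- explicit `⟨e₂−e₃⟩`-invariant solution of `u_tt = u_xx − u⁻¹ u_x²`. -/
theorem stmt_10 (C₁ C₂ : ℝ) (hC₁ : C₁ ≠ 0) :
    let Ω : Set (ℝ × ℝ) := {p | Real.cos (p.1 + C₂) ≠ 0}
    let u : ℝ × ℝ → ℝ := fun p =>
      C₁ * Real.exp (-p.2 ^ 2 / 2) * Real.cos (p.1 + C₂)
    ContDiffOn ℝ (⊤ : ℕ∞) u Ω ∧ (∀ p ∈ Ω, u p ≠ 0) ∧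
      ∀ p ∈ Ω, pderivT (pderivT u) p
        = pderivX (pderivX u) p - (u p)⁻¹ * (pderivX u p) ^ 2 := by
  intro Ω u
  have ut : ∀ p : ℝ × ℝ, pderivT u p
      = -(C₁ * Real.exp (-p.2 ^ 2 / 2) * Real.sin (p.1 + C₂)) := by
    intro p
    have h := ((cos_hd p.1 C₂).const_mul (C₁ * Real.exp (-p.2 ^ 2 / 2)))
    have := h.deriv
    simp only [pderivT, u]
    rw [this]; ring
  have utt : ∀ p : ℝ × ℝ, pderivT (pderivT u) p = -u p := by
    intro p
    have heq : (fun s => pderivT u (s, p.2))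
        = fun s => -(C₁ * Real.exp (-p.2 ^ 2 / 2) * Real.sin (s + C₂)) := by
      funext s; exact ut (s, p.2)
    have h := (((sin_hd p.1 C₂).const_mul (C₁ * Real.exp (-p.2 ^ 2 / 2))).neg)
    rw [pderivT, heq]; exact h.deriv
  have ux : ∀ p : ℝ × ℝ, pderivX u p = -p.2 * u p := by
    intro p
    have h := ((exp_hd p.2).const_mul C₁).mul_const (Real.cos (p.1 + C₂))
    simp only [pderivX, u]
    rw [h.deriv]; ring
  have uxx : ∀ p : ℝ × ℝ, pderivX (pderivX u) p = (p.2 ^ 2 - 1) * u p := by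
    intro p
    have heq : (fun y => pderivX u (p.1, y))
        = fun y => -y * (C₁ * Real.exp (-y ^ 2 / 2) * Real.cos (p.1 + C₂)) := by
      funext y; exact ux (p.1, y)
    have h1 : HasDerivAt (fun y : ℝ => C₁ * Real.exp (-y ^ 2 / 2) * Real.cos (p.1 + C₂))
        (-p.2 * (C₁ * Real.exp (-p.2 ^ 2 / 2)) * Real.cos (p.1 + C₂)) p.2 := by
      have := ((exp_hd p.2).const_mul C₁).mul_const (Real.cos (p.1 + C₂))
      refine this.congr_deriv ?_; ring
    have h := ((hasDerivAt_id p.2).neg).mul h1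
    simp only [Pi.neg_def, Pi.mul_def, id_eq] at h
    rw [pderivX, heq, h.deriv]
    simp only [u]; ring
  refine ⟨?_, ?_, ?_⟩
  · apply ContDiff.contDiffOn
    apply ContDiff.mul
    · exact contDiff_const.mul ((((contDiff_snd.pow 2).neg).div_const 2).exp)
    · exact (contDiff_fst.add contDiff_const).cos
  · intro p hp
    simp only [u]
    exact mul_ne_zero (mul_ne_zero hC₁ (Real.exp_ne_zero _)) hp
  · intro p hp
    have hu : u p ≠ 0 := mul_ne_zero (mul_ne_zero hC₁ (Real.exp_ne_zero _)) hp
    rw [utt p, uxx p, ux p]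
    field_simp
    ring
end

section
/- Let C₁ ≠ 0 and C₂ ∈ ℝ. The function u(t,x) = C₁·exp(x²/2)·cosh(t + C₂) is smooth, nowhere zero, and satisfies u_tt(t,x) = u_xx(t,x) − u(t,x)⁻¹·(u_x(t,x))² for all (t,x) ∈ ℝ². -/
lemma hd_cosh (C₁ C₂ a s : ℝ) :
    HasDerivAt (fun s => C₁ * Real.exp (a ^ 2 / 2) * Real.cosh (s + C₂))
      (C₁ * Real.exp (a ^ 2 / 2) * Real.sinh (s + C₂)) s := by
  have h := (((hasDerivAt_id s).add_const C₂).cosh).const_mul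
    (C₁ * Real.exp (a ^ 2 / 2))
  simpa using h

lemma hd_sinh (C₁ C₂ a s : ℝ) :
    HasDerivAt (fun s => C₁ * Real.exp (a ^ 2 / 2) * Real.sinh (s + C₂))
      (C₁ * Real.exp (a ^ 2 / 2) * Real.cosh (s + C₂)) s := by
  have h := (((hasDerivAt_id s).add_const C₂).sinh).const_mul
    (C₁ * Real.exp (a ^ 2 / 2))
  simpa using h

lemma hd_exp (y : ℝ) :
    HasDerivAt (fun y : ℝ => Real.exp (y ^ 2 / 2)) (Real.exp (y ^ 2 / 2) * y) y := by
  have h := ((hasDerivAt_pow 2 y).div_const 2).exp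
  simpa using h

lemma hd_x (C₁ t C₂ y : ℝ) :
    HasDerivAt (fun y => C₁ * Real.exp (y ^ 2 / 2) * Real.cosh (t + C₂))
      (C₁ * (Real.exp (y ^ 2 / 2) * y) * Real.cosh (t + C₂)) y := by
  have h := (((hd_exp y).const_mul C₁).mul_const (Real.cosh (t + C₂)))
  simpa [mul_comm, mul_assoc, mul_left_comm] using h

lemma hd_xx (C₁ t C₂ y : ℝ) :
    HasDerivAt (fun y => C₁ * (Real.exp (y ^ 2 / 2) * y) * Real.cosh (t + C₂))
      (C₁ * (Real.exp (y ^ 2 / 2) * y * y + Real.exp (y ^ 2 / 2)) *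
        Real.cosh (t + C₂)) y := by
  have h : HasDerivAt (fun y => C₁ * (Real.exp (y ^ 2 / 2) * y) * Real.cosh (t + C₂))
      (C₁ * (Real.exp (y ^ 2 / 2) * y * id y + Real.exp (y ^ 2 / 2) * 1) * Real.cosh (t + C₂)) y :=
    ((((hd_exp y).mul (hasDerivAt_id y)).const_mul C₁).mul_const
    (Real.cosh (t + C₂)))
  convert h using 1
  simp only [id]
  ring

/-- explicit `⟨e₂+e₃⟩`-invariant solution of `u_tt = u_xx − u⁻¹ u_x²`. -/
theorem stmt_11 (C₁ C₂ : ℝ) (hC₁ : C₁ ≠ 0) :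
    let u : ℝ × ℝ → ℝ := fun p =>
      C₁ * Real.exp (p.2 ^ 2 / 2) * Real.cosh (p.1 + C₂)
    ContDiff ℝ (⊤ : ℕ∞) u ∧ (∀ p : ℝ × ℝ, u p ≠ 0) ∧
      ∀ p : ℝ × ℝ, pderivT (pderivT u) p
        = pderivX (pderivX u) p - (u p)⁻¹ * (pderivX u p) ^ 2 := by
  intro u
  have hu0 : ∀ p : ℝ × ℝ, u p ≠ 0 := by
    intro p
    exact mul_ne_zero (mul_ne_zero hC₁ (Real.exp_ne_zero _))
      (ne_of_gt (Real.cosh_pos _))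
  refine ⟨?_, hu0, ?_⟩
  · have : ContDiff ℝ (⊤ : ℕ∞) (fun p : ℝ × ℝ =>
        C₁ * Real.exp (p.2 ^ 2 / 2) * Real.cosh (p.1 + C₂)) := by
      apply ContDiff.mul
      · exact contDiff_const.mul
          ((Real.contDiff_exp.comp ((contDiff_snd.pow 2).div_const 2)))
      · exact Real.contDiff_cosh.comp (contDiff_fst.add contDiff_const)
    exact this
  · intro p
    -- first-order derivatives
    have hT : pderivT u = fun p : ℝ × ℝ =>
        C₁ * Real.exp (p.2 ^ 2 / 2) * Real.sinh (p.1 + C₂) := by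
      funext q
      exact (hd_cosh C₁ C₂ q.2 q.1).deriv
    have hX : pderivX u = fun p : ℝ × ℝ =>
        C₁ * (Real.exp (p.2 ^ 2 / 2) * p.2) * Real.cosh (p.1 + C₂) := by
      funext q
      exact (hd_x C₁ q.1 C₂ q.2).deriv
    have hTT : pderivT (pderivT u) p = u p := by
      rw [hT]
      exact (hd_sinh C₁ C₂ p.2 p.1).deriv
    have hXX : pderivX (pderivX u) p =
        C₁ * (Real.exp (p.2 ^ 2 / 2) * p.2 * p.2 + Real.exp (p.2 ^ 2 / 2)) *
          Real.cosh (p.1 + C₂) := by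
      rw [hX]
      exact (hd_xx C₁ p.1 C₂ p.2).deriv
    rw [hTT, hXX, hX]
    have hup := hu0 p
    show u p = _
    simp only [u] at hup ⊢
    field_simp
    ring
end

section
/- Let α ∈ ℝ, C₁ ∈ ℝ and C₂ ≠ 0. On the open set Ω = {(t,x) ∈ ℝ² : t − α·x + C₁ > 0}, the function u(t,x) = C₂·(t − α·x + C₁)^(1−α²) (real power) is smooth, nowhere zero, and satisfies u_tt(t,x) = u_xx(t,x) − u(t,x)⁻¹·(u_x(t,x))² for all (t,x) ∈ Ω. -/
lemma auxT (C α C₁ e x s : ℝ) (hs : 0 < s - α * x + C₁) :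
    HasDerivAt (fun s' => C * (s' - α * x + C₁) ^ e)
      (C * e * (s - α * x + C₁) ^ (e - 1)) s := by
  have h1 : HasDerivAt (fun s' : ℝ => s' - α * x + C₁) 1 s := by
    simpa using ((hasDerivAt_id s).sub_const (α * x)).add_const C₁
  have h2 := (Real.hasDerivAt_rpow_const (p := e)
      (x := s - α * x + C₁) (Or.inl hs.ne')).comp s h1
  have h3 := h2.const_mul C
  refine h3.congr_deriv ?_
  ring

lemma auxX (C α C₁ e t y : ℝ) (hy : 0 < t - α * y + C₁) :
    HasDerivAt (fun y' => C * (t - α * y' + C₁) ^ e)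
      (C * e * (t - α * y + C₁) ^ (e - 1) * (-α)) y := by
  have h1 : HasDerivAt (fun y' : ℝ => t - α * y' + C₁) (-α) y := by
    simpa using (((hasDerivAt_id y).const_mul α).const_sub t).add_const C₁
  have h2 := (Real.hasDerivAt_rpow_const (p := e)
      (x := t - α * y + C₁) (Or.inl hy.ne')).comp y h1
  have h3 := h2.const_mul C
  refine h3.congr_deriv ?_
  ring

/-- travelling-wave (`⟨e₂+αe₄⟩`-invariant) solution of
`u_tt = u_xx − u⁻¹ u_x²`. -/
theorem stmt_12 (α C₁ C₂ : ℝ) (hC₂ : C₂ ≠ 0) :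
    let Ω : Set (ℝ × ℝ) := {p | 0 < p.1 - α * p.2 + C₁}
    let u : ℝ × ℝ → ℝ := fun p =>
      C₂ * (p.1 - α * p.2 + C₁) ^ (1 - α ^ 2)
    ContDiffOn ℝ (⊤ : ℕ∞) u Ω ∧ (∀ p ∈ Ω, u p ≠ 0) ∧
      ∀ p ∈ Ω, pderivT (pderivT u) p
        = pderivX (pderivX u) p - (u p)⁻¹ * (pderivX u p) ^ 2 := by
  intro Ω u
  set e : ℝ := 1 - α ^ 2 with he
  refine ⟨?_, ?_, ?_⟩
  · intro p hp
    have hz : (0:ℝ) < p.1 - α * p.2 + C₁ := hp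
    have h1 : ContDiffAt ℝ (⊤ : ℕ∞) (fun q : ℝ × ℝ => q.1 - α * q.2 + C₁) p := by
      fun_prop
    have h2 : ContDiffAt ℝ (⊤ : ℕ∞) (fun x : ℝ => x ^ e) (p.1 - α * p.2 + C₁) :=
      Real.contDiffAt_rpow_const_of_ne hz.ne'
    exact (contDiffAt_const.mul (h2.comp p h1)).contDiffWithinAt
  · intro p hp
    have hz : (0:ℝ) < p.1 - α * p.2 + C₁ := hp
    exact mul_ne_zero hC₂ (Real.rpow_pos_of_pos hz _).ne'
  · intro p hp
    have hz : (0:ℝ) < p.1 - α * p.2 + C₁ := hp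
    set z : ℝ := p.1 - α * p.2 + C₁ with hzdef
    -- first derivatives
    have hux : pderivX u p = C₂ * e * z ^ (e - 1) * (-α) :=
      (auxX C₂ α C₁ e p.1 p.2 hz).deriv
    -- second t-derivative
    have hSt : {s : ℝ | 0 < s - α * p.2 + C₁} ∈ nhds p.1 := by
      have : IsOpen {s : ℝ | 0 < s - α * p.2 + C₁} :=
        isOpen_lt continuous_const (by fun_prop)
      exact this.mem_nhds hz
    have hEqT : (fun s => pderivT u (s, p.2)) =ᶠ[nhds p.1]
        (fun s => C₂ * e * (s - α * p.2 + C₁) ^ (e - 1)) := by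
      filter_upwards [hSt] with s hs
      exact (auxT C₂ α C₁ e p.2 s hs).deriv
    have hutt : pderivT (pderivT u) p = C₂ * e * (e - 1) * z ^ (e - 1 - 1) := by
      have := (auxT (C₂ * e) α C₁ (e - 1) p.2 p.1 hz).deriv
      unfold pderivT
      rw [show (fun s => deriv (fun s' => u (s', p.2)) s) = fun s => pderivT u (s, p.2) from rfl] at *
      rw [hEqT.deriv_eq, this]
    -- second x-derivative
    have hSx : {y : ℝ | 0 < p.1 - α * y + C₁} ∈ nhds p.2 := by
      have : IsOpen {y : ℝ | 0 < p.1 - α * y + C₁} :=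
        isOpen_lt continuous_const (by fun_prop)
      exact this.mem_nhds hz
    have hEqX : (fun y => pderivX u (p.1, y)) =ᶠ[nhds p.2]
        (fun y => (C₂ * e * (-α)) * (p.1 - α * y + C₁) ^ (e - 1)) := by
      filter_upwards [hSx] with y hy
      have := (auxX C₂ α C₁ e p.1 y hy).deriv
      unfold pderivX
      rw [this]; ring
    have huxx : pderivX (pderivX u) p
        = (C₂ * e * (-α)) * (e - 1) * z ^ (e - 1 - 1) * (-α) := by
      have := (auxX (C₂ * e * (-α)) α C₁ (e - 1) p.1 p.2 hz).deriv
      unfold pderivX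
      rw [show (fun y => deriv (fun y' => u (p.1, y')) y) = fun y => pderivX u (p.1, y) from rfl]
      rw [hEqX.deriv_eq, this]
    have hu : u p = C₂ * z ^ e := rfl
    rw [hutt, huxx, hux, hu]
    have hz1 : z ≠ 0 := hz.ne'
    have hw : z ^ e ≠ 0 := (Real.rpow_pos_of_pos hz _).ne'
    have hr1 : z ^ (e - 1) = z ^ e / z := by
      rw [Real.rpow_sub hz, Real.rpow_one]
    have hr2 : z ^ (e - 1 - 1) = z ^ e / z / z := by
      rw [Real.rpow_sub hz, Real.rpow_sub hz, Real.rpow_one]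
    rw [hr1, hr2, he]
    field_simp
    ring
end

section
/- For all C₁, C₂ ∈ ℝ, the function u(t,x) = (x + C₁)·(1 − log(x + C₁)) + C₂, defined on the open set {(t,x) : x + C₁ > 0}, is smooth there and satisfies u_tt(t,x) = u_xx(t,x) + exp(u_x(t,x)) for all (t,x) with x + C₁ > 0. -/
lemma hf_aux (C₁ C₂ : ℝ) : ∀ y : ℝ, 0 < y + C₁ →
    HasDerivAt (fun y => (y + C₁) * (1 - Real.log (y + C₁)) + C₂)
      (-Real.log (y + C₁)) y := by
  intro y hy
  have h1 : HasDerivAt (fun y : ℝ => y + C₁) 1 y := (hasDerivAt_id y).add_const C₁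
  have hlog : HasDerivAt (fun y : ℝ => Real.log (y + C₁)) ((y + C₁)⁻¹ * 1) y :=
    by exact (Real.hasDerivAt_log hy.ne').comp y h1
  have h2 : HasDerivAt (fun y : ℝ => 1 - Real.log (y + C₁)) (-((y + C₁)⁻¹)) y := by
    have := (hasDerivAt_const y (1:ℝ)).sub hlog
    simp at this
    exact this
  have h3 := (h1.mul h2).add_const C₂
  refine h3.congr_deriv ?_
  field_simp
  ring

/-- static exact solution of `u_tt = u_xx + e^{u_x}`. -/
theorem stmt_14 (C₁ C₂ : ℝ) :
    let u : ℝ × ℝ → ℝ := fun p =>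
      (p.2 + C₁) * (1 - Real.log (p.2 + C₁)) + C₂
    ContDiffOn ℝ (⊤ : ℕ∞) u {p : ℝ × ℝ | 0 < p.2 + C₁} ∧
      ∀ p : ℝ × ℝ, 0 < p.2 + C₁ →
        pderivT (pderivT u) p = pderivX (pderivX u) p + Real.exp (pderivX u p) := by
  intro u
  have hf := hf_aux C₁ C₂
  have hopen : IsOpen {y : ℝ | 0 < y + C₁} :=
    isOpen_lt continuous_const (continuous_id.add continuous_const)
  constructor
  · have hproj : ContDiff ℝ (⊤ : ℕ∞) (fun p : ℝ × ℝ => p.2 + C₁) :=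
      contDiff_snd.add contDiff_const
    have hlog : ContDiffOn ℝ (⊤ : ℕ∞) (fun p : ℝ × ℝ => Real.log (p.2 + C₁))
        {p : ℝ × ℝ | 0 < p.2 + C₁} := by
      apply Real.contDiffOn_log.comp hproj.contDiffOn
      intro p hp
      exact ne_of_gt hp
    exact ((hproj.contDiffOn.mul (contDiffOn_const.sub hlog)).add contDiffOn_const)
  · intro p hp
    have hT : pderivT u = fun _ => (0:ℝ) := by
      funext q
      simp [pderivT, u]
    have hX : ∀ q : ℝ × ℝ, 0 < q.2 + C₁ → pderivX u q = -Real.log (q.2 + C₁) := by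
      intro q hq
      exact (hf q.2 hq).deriv
    have hXX : pderivX (pderivX u) p = -((p.2 + C₁)⁻¹) := by
      have hev : (fun y => pderivX u (p.1, y)) =ᶠ[nhds p.2]
          (fun y => -Real.log (y + C₁)) := by
        filter_upwards [hopen.mem_nhds hp] with y hy
        exact hX (p.1, y) hy
      have hg : HasDerivAt (fun y : ℝ => -Real.log (y + C₁)) (-((p.2 + C₁)⁻¹)) p.2 := by
        have := ((Real.hasDerivAt_log hp.ne').comp p.2
          ((hasDerivAt_id p.2).add_const C₁)).neg
        simp at this
        exact this
      rw [pderivX, hev.deriv_eq, hg.deriv]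
    rw [hT, hXX, hX p hp]
    simp [pderivT, Real.exp_neg, Real.exp_log hp]
end

section
/- Let α > 0 and C₁, C₂ ∈ ℝ. The function u(t,x) = α⁻¹·t·x + α²·exp(t/α) + C₁·t + C₂ is smooth on ℝ² and satisfies u_tt(t,x) = u_xx(t,x) + exp(u_x(t,x)) for all (t,x) ∈ ℝ². -/
/-- `⟨e₃+αe₄⟩`-invariant exact solution of `u_tt = u_xx + e^{u_x}`. -/
theorem stmt_15 (α C₁ C₂ : ℝ) (hα : 0 < α) :
    let u : ℝ × ℝ → ℝ := fun p =>
      α⁻¹ * p.1 * p.2 + α ^ 2 * Real.exp (p.1 / α) + C₁ * p.1 + C₂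
    ContDiff ℝ (⊤ : ℕ∞) u ∧
      ∀ p : ℝ × ℝ,
        pderivT (pderivT u) p = pderivX (pderivX u) p + Real.exp (pderivX u p) := by
  intro u
  have hx : ∀ p : ℝ × ℝ, pderivX u p = α⁻¹ * p.1 := by
    intro p
    have h : HasDerivAt (fun y : ℝ => u (p.1, y)) (α⁻¹ * p.1) p.2 := by
      have h1 : HasDerivAt (fun y : ℝ => α⁻¹ * p.1 * y) (α⁻¹ * p.1) p.2 := by
        simpa using (hasDerivAt_id p.2).const_mul (α⁻¹ * p.1)
      simpa [u] using ((h1.add_const (α ^ 2 * Real.exp (p.1 / α))).add_const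
        (C₁ * p.1)).add_const C₂
    simpa [pderivX] using h.deriv
  have ht : ∀ p : ℝ × ℝ, pderivT u p = α⁻¹ * p.2 + α * Real.exp (p.1 / α) + C₁ := by
    intro p
    have h : HasDerivAt (fun s : ℝ => u (s, p.2))
        (α⁻¹ * p.2 + α * Real.exp (p.1 / α) + C₁) p.1 := by
      have h1 : HasDerivAt (fun s : ℝ => α⁻¹ * s * p.2) (α⁻¹ * p.2) p.1 := by
        simpa using (((hasDerivAt_id p.1).const_mul α⁻¹).mul_const p.2)
      have h2 : HasDerivAt (fun s : ℝ => α ^ 2 * Real.exp (s / α)) (α * Real.exp (p.1 / α)) p.1 := by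
        have he : HasDerivAt (fun s : ℝ => Real.exp (s / α)) (Real.exp (p.1 / α) * α⁻¹) p.1 := by
          have hd : HasDerivAt (fun s : ℝ => s / α) α⁻¹ p.1 := by
            simpa using (hasDerivAt_id p.1).div_const α
          exact (Real.hasDerivAt_exp (p.1 / α)).comp p.1 hd
        have := he.const_mul (α ^ 2)
        refine this.congr_deriv ?_
        rw [mul_comm (Real.exp _) α⁻¹, ← mul_assoc, pow_two, mul_assoc α α α⁻¹, mul_inv_cancel₀ hα.ne']
        ring
      have h3 : HasDerivAt (fun s : ℝ => C₁ * s) C₁ p.1 := by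
        simpa using (hasDerivAt_id p.1).const_mul C₁
      simpa [u] using ((h1.add h2).add h3).add_const C₂
    simpa [pderivT] using h.deriv
  refine ⟨?_, ?_⟩
  · have : ContDiff ℝ (⊤ : ℕ∞) (fun p : ℝ × ℝ => α⁻¹ * p.1 * p.2 + α ^ 2 * Real.exp (p.1 / α) + C₁ * p.1 + C₂) := by
      fun_prop (disch := (intros; positivity))
    exact this
  · intro p
    have htt : pderivT (pderivT u) p = Real.exp (p.1 / α) := by
      have h : HasDerivAt (fun s : ℝ => pderivT u (s, p.2)) (Real.exp (p.1 / α)) p.1 := by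
        have he : HasDerivAt (fun s : ℝ => Real.exp (s / α)) (Real.exp (p.1 / α) * α⁻¹) p.1 := by
          have hd : HasDerivAt (fun s : ℝ => s / α) α⁻¹ p.1 := by
            simpa using (hasDerivAt_id p.1).div_const α
          exact (Real.hasDerivAt_exp (p.1 / α)).comp p.1 hd
        have h2 := (he.const_mul α).add_const (α⁻¹ * p.2 + C₁)
        have heq : (fun s : ℝ => α * Real.exp (s / α) + (α⁻¹ * p.2 + C₁))
            = fun s : ℝ => pderivT u (s, p.2) := by
          funext s; rw [ht (s, p.2)]; ring
        rw [heq] at h2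
        refine h2.congr_deriv ?_
        rw [mul_comm (Real.exp _) α⁻¹, ← mul_assoc, mul_inv_cancel₀ hα.ne', one_mul]
      simpa [pderivT] using h.deriv
    have hxx : pderivX (pderivX u) p = 0 := by
      have h : HasDerivAt (fun y : ℝ => pderivX u (p.1, y)) 0 p.2 := by
        have : (fun y : ℝ => pderivX u (p.1, y)) = fun _ : ℝ => α⁻¹ * p.1 := by
          funext y; rw [hx (p.1, y)]
        rw [this]; exact hasDerivAt_const _ _
      simpa [pderivX] using h.deriv
    rw [htt, hxx, hx p]
    rw [div_eq_inv_mul]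
    ring
end

section
/- Let m > 0. The function u(t,x) = (1/2)·m·t²·log(t) − exp(3/2)·t·x, defined on the open set {(t,x) : t > 0}, is smooth there, has u_x(t,x) = −exp(3/2)·t ≠ 0, and satisfies u_tt(t,x) = u_xx(t,x) + m·log|u_x(t,x)| for all (t,x) with t > 0. -/
/-- explicit dilation-invariant solution of `u_tt = u_xx + m ln|u_x|`. -/
theorem stmt_17 (m : ℝ) (hm : 0 < m) :
    let u : ℝ × ℝ → ℝ := fun p =>
      (1 / 2) * m * p.1 ^ 2 * Real.log p.1 - Real.exp (3 / 2) * p.1 * p.2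
    ContDiffOn ℝ (⊤ : ℕ∞) u {p : ℝ × ℝ | 0 < p.1} ∧
    (∀ p : ℝ × ℝ, 0 < p.1 →
      pderivX u p = -Real.exp (3 / 2) * p.1 ∧ pderivX u p ≠ 0) ∧
    ∀ p : ℝ × ℝ, 0 < p.1 →
      pderivT (pderivT u) p
        = pderivX (pderivX u) p + m * Real.log |pderivX u p| := by
  intro u
  -- pderivX u p = -e^{3/2} p.1 everywhere
  have hX : ∀ p : ℝ × ℝ, pderivX u p = -Real.exp (3/2) * p.1 := by
    intro p
    unfold pderivX
    have : (fun y => u (p.1, y)) = fun y =>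
        (1/2) * m * p.1 ^ 2 * Real.log p.1 - Real.exp (3/2) * p.1 * y := rfl
    rw [this]
    have hd : HasDerivAt (fun y : ℝ =>
        (1/2) * m * p.1 ^ 2 * Real.log p.1 - Real.exp (3/2) * p.1 * y)
        (-Real.exp (3/2) * p.1) p.2 := by
      simpa using ((hasDerivAt_id p.2).const_mul (Real.exp (3/2) * p.1)).const_sub
        ((1/2) * m * p.1 ^ 2 * Real.log p.1)
    exact hd.deriv
  refine ⟨?_, ?_, ?_⟩
  · -- smoothness
    have h1 : ContDiffOn ℝ (⊤ : ℕ∞) (fun p : ℝ × ℝ => Real.log p.1) {p : ℝ × ℝ | 0 < p.1} := by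
      apply Real.contDiffOn_log.comp (contDiff_fst.contDiffOn)
      intro p hp
      exact ne_of_gt hp
    have h2 : ContDiffOn ℝ (⊤ : ℕ∞) (fun p : ℝ × ℝ => (1/2) * m * p.1 ^ 2) {p : ℝ × ℝ | 0 < p.1} :=
      (contDiff_const.mul (contDiff_fst.pow 2)).contDiffOn
    have h3 : ContDiffOn ℝ (⊤ : ℕ∞) (fun p : ℝ × ℝ => Real.exp (3/2) * p.1 * p.2)
        {p : ℝ × ℝ | 0 < p.1} :=
      ((contDiff_const.mul contDiff_fst).mul contDiff_snd).contDiffOn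
    exact (h2.mul h1).sub h3
  · intro p hp
    refine ⟨hX p, ?_⟩
    rw [hX p]
    have := Real.exp_pos (3/2 : ℝ)
    nlinarith
  · intro p hp
    -- pderivX (pderivX u) p = 0
    have hXX : pderivX (pderivX u) p = 0 := by
      show deriv (fun y => pderivX u (p.1, y)) p.2 = 0
      have : (fun y => pderivX u (p.1, y)) = fun _ => -Real.exp (3/2) * p.1 := by
        funext y; exact hX (p.1, y)
      rw [this]; simp
    -- pderivT u on t>0
    have hT : ∀ q : ℝ × ℝ, 0 < q.1 →
        pderivT u q = m * q.1 * Real.log q.1 + m * q.1 / 2 - Real.exp (3/2) * q.2 := by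
      intro q hq
      unfold pderivT
      have hd : HasDerivAt (fun s => (1/2) * m * s ^ 2 * Real.log s - Real.exp (3/2) * s * q.2)
          (m * q.1 * Real.log q.1 + m * q.1 / 2 - Real.exp (3/2) * q.2) q.1 := by
        have h1 : HasDerivAt (fun s : ℝ => (1/2) * m * s ^ 2) ((1/2) * m * (2 * q.1)) q.1 := by
          simpa using ((hasDerivAt_pow 2 q.1).const_mul ((1/2) * m))
        have h2 : HasDerivAt Real.log (q.1⁻¹) q.1 := Real.hasDerivAt_log (ne_of_gt hq)
        have h3 := h1.mul h2
        have h4 : HasDerivAt (fun s : ℝ => Real.exp (3/2) * s * q.2)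
            (Real.exp (3/2) * q.2) q.1 := by
          have := (hasDerivAt_id q.1).const_mul (Real.exp (3/2) * q.2)
          simp only [mul_one] at this
          convert this using 2 with s
          · rfl
          · rfl
          simp [id]; ring
        have h5 := h3.sub h4
        convert h5 using 1
        · rfl
        · rfl
        · rfl
        field_simp
      exact hd.deriv
    -- pderivT (pderivT u) p
    have hTT : pderivT (pderivT u) p = m * Real.log p.1 + m + m / 2 := by
      show deriv (fun s => pderivT u (s, p.2)) p.1 = _
      have hev : (fun s => pderivT u (s, p.2)) =ᶠ[nhds p.1]
          (fun s => m * s * Real.log s + m * s / 2 - Real.exp (3/2) * p.2) := by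
        filter_upwards [eventually_gt_nhds hp] with s hs
        exact hT (s, p.2) hs
      rw [hev.deriv_eq]
      have hd : HasDerivAt (fun s => m * s * Real.log s + m * s / 2 - Real.exp (3/2) * p.2)
          (m * Real.log p.1 + m + m / 2) p.1 := by
        have h1 : HasDerivAt (fun s : ℝ => m * s) m p.1 := by
          simpa using (hasDerivAt_id p.1).const_mul m
        have h2 := h1.mul (Real.hasDerivAt_log (ne_of_gt hp))
        have h3 : HasDerivAt (fun s : ℝ => m * s / 2) (m / 2) p.1 := by
          simpa [mul_comm, mul_div_assoc] using
            (((hasDerivAt_id p.1).const_mul m).div_const 2)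
        have h4 := (h2.add h3).sub_const (Real.exp (3/2) * p.2)
        convert h4 using 1
        · rfl
        · rfl
        · rfl
        field_simp
      exact hd.deriv
    rw [hTT, hXX, hX p]
    have h1 : |(-Real.exp (3/2) * p.1)| = Real.exp (3/2) * p.1 := by
      rw [abs_of_neg, neg_mul, neg_neg]
      have := Real.exp_pos (3/2 : ℝ)
      nlinarith
    rw [h1, Real.log_mul (ne_of_gt (Real.exp_pos _)) (ne_of_gt hp), Real.log_exp]
    ring
end

section
/- Let k ∈ ℝ with k ∉ {0, 1, −1, −2}, and let C₁, C₂ ∈ ℝ. The function u(t,x) = t·x + (k² + 3k + 2)⁻¹·t^(k+2) + C₁·t + C₂ (real power of t), defined on the open set {(t,x) : t > 0}, is smooth there and satisfies u_tt(t,x) = u_xx(t,x) + |u_x(t,x)|^k for all (t,x) with t > 0. -/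
/-- `⟨e₃+e₄⟩`-invariant exact solution of `u_tt = u_xx + |u_x|^k`. -/
theorem stmt_19 (k : ℝ) (hk0 : k ≠ 0) (hk1 : k ≠ 1) (hk2 : k ≠ -1) (hk3 : k ≠ -2)
    (C₁ C₂ : ℝ) :
    let u : ℝ × ℝ → ℝ := fun p =>
      p.1 * p.2 + (k ^ 2 + 3 * k + 2)⁻¹ * p.1 ^ (k + 2) + C₁ * p.1 + C₂
    ContDiffOn ℝ (⊤ : ℕ∞) u {p : ℝ × ℝ | 0 < p.1} ∧
      ∀ p : ℝ × ℝ, 0 < p.1 →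
        pderivT (pderivT u) p = pderivX (pderivX u) p + |pderivX u p| ^ k := by
  intro u
  have hk1' : k + 1 ≠ 0 := by intro h; apply hk2; linarith
  have hk2' : k + 2 ≠ 0 := by intro h; apply hk3; linarith
  have hden : k ^ 2 + 3 * k + 2 ≠ 0 := by
    have : k ^ 2 + 3 * k + 2 = (k + 1) * (k + 2) := by ring
    rw [this]; exact mul_ne_zero hk1' hk2'
  set c : ℝ := (k ^ 2 + 3 * k + 2)⁻¹ with hc
  -- pderivX u = p.1
  have hX : ∀ p : ℝ × ℝ, pderivX u p = p.1 := by
    intro p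
    have h : HasDerivAt (fun y : ℝ => p.1 * y + c * p.1 ^ (k + 2) + C₁ * p.1 + C₂)
        p.1 p.2 := by
      have := (((hasDerivAt_id p.2).const_mul p.1).add_const
        (c * p.1 ^ (k + 2))).add_const (C₁ * p.1)
      simpa using this.add_const C₂
    simpa [pderivX, u] using h.deriv
  -- pderivX (pderivX u) = 0
  have hXX : ∀ p : ℝ × ℝ, pderivX (pderivX u) p = 0 := by
    intro p
    have : (fun y : ℝ => pderivX u (p.1, y)) = fun _ => p.1 := by
      funext y; exact hX (p.1, y)
    have h2 : pderivX (pderivX u) p = deriv (fun y => pderivX u (p.1, y)) p.2 := rfl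
    rw [h2, this, deriv_const]
  -- pderivT u on t > 0
  have hT : ∀ t : ℝ, 0 < t → ∀ x : ℝ,
      pderivT u (t, x) = x + c * (k + 2) * t ^ (k + 1) + C₁ := by
    intro t ht x
    have h1 : HasDerivAt (fun s : ℝ => s ^ (k + 2)) ((k + 2) * t ^ (k + 2 - 1)) t :=
      Real.hasDerivAt_rpow_const (Or.inl ht.ne')
    have h : HasDerivAt (fun s : ℝ => s * x + c * s ^ (k + 2) + C₁ * s + C₂)
        (x + c * (k + 2) * t ^ (k + 1) + C₁) t := by
      have := (((hasDerivAt_id t).mul_const x).add (h1.const_mul c)).add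
        ((hasDerivAt_id t).const_mul C₁)
      have heq : (k + 2 - 1 : ℝ) = k + 1 := by ring
      rw [heq] at this
      have := this.add_const C₂
      refine this.congr_deriv ?_
      ring
    simpa [pderivT, u] using h.deriv
  have hTT : ∀ p : ℝ × ℝ, 0 < p.1 → pderivT (pderivT u) p = p.1 ^ k := by
    rintro ⟨t, x⟩ ht
    have hev : (fun s : ℝ => pderivT u (s, x)) =ᶠ[nhds t]
        fun s => x + c * (k + 2) * s ^ (k + 1) + C₁ := by
      filter_upwards [eventually_gt_nhds ht] with s hs
      exact hT s hs x
    have h1 : HasDerivAt (fun s : ℝ => s ^ (k + 1)) ((k + 1) * t ^ (k + 1 - 1)) t :=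
      Real.hasDerivAt_rpow_const (Or.inl ht.ne')
    have h : HasDerivAt (fun s : ℝ => x + c * (k + 2) * s ^ (k + 1) + C₁)
        (t ^ k) t := by
      have := ((h1.const_mul (c * (k + 2))).const_add x).add_const C₁
      refine this.congr_deriv ?_
      have heq : (k + 1 - 1 : ℝ) = k := by ring
      rw [heq, hc]
      have hD := mul_inv_cancel₀ hden
      linear_combination (t ^ k) * hD
    have : pderivT (pderivT u) (t, x) = deriv (fun s : ℝ => pderivT u (s, x)) t := rfl
    rw [this, hev.deriv_eq, h.deriv]
  constructor
  · intro p hp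
    have hp1 : p.1 ≠ 0 := ne_of_gt hp
    apply ContDiffAt.contDiffWithinAt
    have h1 : ContDiffAt ℝ (⊤ : ℕ∞) (fun q : ℝ × ℝ => q.1 * q.2) p :=
      contDiffAt_fst.mul contDiffAt_snd
    have h2 : ContDiffAt ℝ (⊤ : ℕ∞) (fun q : ℝ × ℝ => c * q.1 ^ (k + 2)) p :=
      ((Real.contDiffAt_rpow_const_of_ne (p := k + 2) hp1).comp p contDiffAt_fst).const_smul c
        |>.congr_of_eventuallyEq (by filter_upwards with q; simp [smul_eq_mul])
    have h3 : ContDiffAt ℝ (⊤ : ℕ∞) (fun q : ℝ × ℝ => C₁ * q.1) p :=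
      contDiffAt_const.mul contDiffAt_fst
    exact ((h1.add h2).add h3).add contDiffAt_const
  · rintro ⟨t, x⟩ ht
    rw [hTT (t, x) ht, hXX, hX]
    simp only [zero_add]
    rw [abs_of_pos ht]
end
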